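/- arXiv:1907.01148 — 2 statements merged into one kernel-verified Lean document; each statement's English description precedes it below -/
import Mathlib

section
/- (Theorem 4.1: positivity and monotonicity of the first-order correction to the stationary radius.) Define A(x) := 2·(−I_1(x)² + I_0(x)·I_2(x)) and B(x) := −2·I_1(x)·I_2(x) + x·I_1(x)² − x·I_0(x)·I_2(x). Then for every real x > 0: A(x) < 0 and B(x) < 0; consequently, for every μ > 0 the quantity R¹(μ) := μ·B(x)/A(x) is strictly positive, and μ ↦ R¹(μ) is strictly increasing on (0,∞). -/
/-- The modified Bessel function of the first kind of (nonnegative integer) order `n`: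
`I_n(x) = (x/2)^n * ∑_{k=0}^∞ (x/2)^{2k} / (k! (n+k)!)`. -/
noncomputable def besselI (n : ℕ) (x : ℝ) : ℝ :=
  (x / 2) ^ n * ∑' k : ℕ, (x / 2) ^ (2 * k) / ((Nat.factorial k : ℝ) * (Nat.factorial (n + k) : ℝ))

/-- `A(x) = 2(−I₁(x)² + I₀(x)I₂(x))`. -/
noncomputable def A (x : ℝ) : ℝ := 2 * (-(besselI 1 x) ^ 2 + besselI 0 x * besselI 2 x)

/-- `B(x) = −2I₁(x)I₂(x) + x I₁(x)² − x I₀(x)I₂(x)`. -/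
noncomputable def B (x : ℝ) : ℝ :=
  -2 * besselI 1 x * besselI 2 x + x * besselI 1 x ^ 2 - x * besselI 0 x * besselI 2 x

/-! ### Auxiliary definitions and lemmas -/

/-- Auxiliary: the `k`-th term of the series for `I_n` (with the prefactor distributed). -/
noncomputable def bf (n : ℕ) (t : ℝ) (k : ℕ) : ℝ :=
  t ^ (n + 2*k) / ((k.factorial : ℝ) * ((n+k).factorial : ℝ))

/-- Auxiliary: the closed-form coefficient in the product series `I_a · I_b`. -/
noncomputable def bc (a b m : ℕ) : ℝ :=
  ((a+b+2*m).factorial : ℝ) /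
    ((m.factorial : ℝ) * ((a+m).factorial : ℝ) * ((b+m).factorial : ℝ)
      * ((a+b+m).factorial : ℝ))

lemma hfacpos' : ∀ n : ℕ, (0:ℝ) < n.factorial := fun n => by
  exact_mod_cast Nat.factorial_pos n

lemma vand (a q m : ℕ) :
    ∑ k ∈ Finset.range (m+1), m.choose k * q.choose (a+k) = (m+q).choose (a+m) := by
  rw [Nat.add_choose_eq, Finset.Nat.sum_antidiagonal_eq_sum_range_succ_mk]
  rw [← Finset.sum_subset (Finset.range_subset_range.2 (by omega : m+1 ≤ a+m+1))
    (fun i _ hi => by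
      have : m < i := by simpa using hi
      simp [Nat.choose_eq_zero_of_lt this])]
  rw [← Finset.sum_range_reflect]
  refine Finset.sum_congr rfl fun k hk => ?_
  have hk' : k ≤ m := by simpa using Nat.lt_succ_iff.mp (Finset.mem_range.mp hk)
  simp only [Nat.add_sub_cancel]
  rw [Nat.choose_symm hk', show a + (m - k) = a + m - k by omega]

lemma key_sum (a b m : ℕ) :
    ∑ k ∈ Finset.range (m+1),
      (1:ℝ) / (k.factorial * (a+k).factorial * (m-k).factorial * (b+(m-k)).factorial)
      = ((a+b+2*m).factorial : ℝ) /
        (m.factorial * (a+m).factorial * (b+m).factorial * (a+b+m).factorial) := by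
  have step : ∀ k ∈ Finset.range (m+1),
      (1:ℝ) / (k.factorial * (a+k).factorial * (m-k).factorial * (b+(m-k)).factorial)
      = (m.choose k * (a+b+m).choose (a+k) : ℕ) /
        (m.factorial * (a+b+m).factorial) := by
    intro k hk
    have hk' : k ≤ m := Nat.lt_succ_iff.mp (Finset.mem_range.mp hk)
    have h1 : (m.choose k * k.factorial * (m-k).factorial : ℕ) = m.factorial :=
      Nat.choose_mul_factorial_mul_factorial hk'
    have h2 : ((a+b+m).choose (a+k) * (a+k).factorial * (b+(m-k)).factorial : ℕ)
        = (a+b+m).factorial := by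
      have := Nat.choose_mul_factorial_mul_factorial
        (show a+k ≤ a+b+m by omega) (n := a+b+m)
      rwa [show a+b+m - (a+k) = b+(m-k) by omega] at this
    have h1' : (m.choose k : ℝ) * k.factorial * (m-k).factorial = m.factorial := by
      exact_mod_cast congrArg (Nat.cast (R := ℝ)) h1
    have h2' : ((a+b+m).choose (a+k) : ℝ) * (a+k).factorial * (b+(m-k)).factorial
        = (a+b+m).factorial := by
      exact_mod_cast congrArg (Nat.cast (R := ℝ)) h2
    push_cast
    rw [div_eq_div_iff (by positivity) (by positivity), one_mul, ← h1', ← h2']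
    ring
  rw [Finset.sum_congr rfl step, ← Finset.sum_div]
  have hv : ∑ k ∈ Finset.range (m+1), ((m.choose k * (a+b+m).choose (a+k) : ℕ) : ℝ)
      = ((m+(a+b+m)).choose (a+m) : ℕ) := by
    rw [← Nat.cast_sum]
    exact_mod_cast congrArg (Nat.cast (R := ℝ)) (vand a (a+b+m) m)
  rw [hv]
  have h3 : ((a+b+2*m).choose (a+m) * (a+m).factorial * (b+m).factorial : ℕ)
      = (a+b+2*m).factorial := by
    have := Nat.choose_mul_factorial_mul_factorial
      (show a+m ≤ a+b+2*m by omega) (n := a+b+2*m)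
    rwa [show a+b+2*m - (a+m) = b+m by omega] at this
  have h3' : ((a+b+2*m).choose (a+m) : ℝ) * (a+m).factorial * (b+m).factorial
      = (a+b+2*m).factorial := by
    exact_mod_cast congrArg (Nat.cast (R := ℝ)) h3
  rw [show m+(a+b+m) = a+b+2*m by omega]
  rw [div_eq_div_iff (by positivity) (by positivity), ← h3']
  ring

lemma summable_norm_bf (n : ℕ) (t : ℝ) : Summable (fun k => ‖bf n t k‖) := by
  have h : ∀ k : ℕ, ‖bf n t k‖ ≤ |t|^n * (|t|^2)^k / k.factorial := by
    intro k
    have h1 : ‖bf n t k‖ = |t|^(n+2*k) / ((k.factorial : ℝ) * ((n+k).factorial : ℝ)) := by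
      rw [bf, norm_div, Real.norm_eq_abs, abs_pow, Real.norm_eq_abs,
        abs_of_pos (by positivity : (0:ℝ) < (k.factorial : ℝ) * ((n+k).factorial : ℝ))]
    rw [h1, pow_add, pow_mul]
    rw [div_le_div_iff₀ (by positivity) (hfacpos' k)]
    have : (k.factorial : ℝ) ≤ (k.factorial : ℝ) * ((n+k).factorial : ℝ) := by
      nlinarith [hfacpos' k, hfacpos' (n+k),
        (by exact_mod_cast Nat.one_le_iff_ne_zero.2 (Nat.factorial_ne_zero (n+k)) :
          (1:ℝ) ≤ ((n+k).factorial : ℝ))]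
    nlinarith [pow_nonneg (abs_nonneg t) n, pow_nonneg (pow_nonneg (abs_nonneg t) 2) k,
      mul_nonneg (pow_nonneg (abs_nonneg t) n) (pow_nonneg (pow_nonneg (abs_nonneg t) 2) k)]
  exact Summable.of_nonneg_of_le (fun k => norm_nonneg _) h
    (((Real.summable_pow_div_factorial (|t|^2)).mul_left (|t|^n)).congr
      (fun k => by ring))

lemma besselI_eq (n : ℕ) (x : ℝ) : besselI n x = ∑' k, bf n (x/2) k := by
  rw [besselI, ← tsum_mul_left]
  exact tsum_congr fun k => by rw [bf, pow_add, mul_div_assoc]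

lemma bf_antidiagonal (a b m : ℕ) (t : ℝ) :
    ∑ kl ∈ Finset.HasAntidiagonal.antidiagonal m, bf a t kl.1 * bf b t kl.2
      = t^(a+b+2*m) * bc a b m := by
  rw [Finset.Nat.sum_antidiagonal_eq_sum_range_succ_mk]
  have step : ∀ k ∈ Finset.range (m+1),
      bf a t k * bf b t (m-k)
      = t^(a+b+2*m) *
        ((1:ℝ) / (k.factorial * (a+k).factorial * (m-k).factorial * (b+(m-k)).factorial)) := by
    intro k hk
    have hk' : k ≤ m := Nat.lt_succ_iff.mp (Finset.mem_range.mp hk)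
    rw [bf, bf, div_mul_div_comm, ← pow_add,
      show a + 2*k + (b + 2*(m-k)) = a+b+2*m by omega]
    rw [mul_one_div]
    ring
  rw [Finset.sum_congr rfl step, ← Finset.mul_sum, key_sum, bc]

lemma besselI_mul (a b : ℕ) (x : ℝ) :
    besselI a x * besselI b x = ∑' m : ℕ, (x/2)^(a+b+2*m) * bc a b m := by
  rw [besselI_eq, besselI_eq,
    tsum_mul_tsum_eq_tsum_sum_antidiagonal_of_summable_norm
      (summable_norm_bf a (x/2)) (summable_norm_bf b (x/2))]
  exact tsum_congr fun m => bf_antidiagonal a b m (x/2)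

lemma summable_prod (a b : ℕ) (x : ℝ) :
    Summable (fun m : ℕ => (x/2)^(a+b+2*m) * bc a b m) := by
  have := (summable_norm_sum_mul_antidiagonal_of_summable_norm
    (summable_norm_bf a (x/2)) (summable_norm_bf b (x/2))).of_norm
  exact this.congr fun m => bf_antidiagonal a b m (x/2)

lemma bc11_eq (m : ℕ) : bc 1 1 m
    = ((2*m+2).factorial : ℝ) /
      (m.factorial * (m+1).factorial * (m+1).factorial * (m+2).factorial) := by
  rw [bc, show 1+1+2*m = 2*m+2 by omega, show 1+m = m+1 by omega, show 1+1+m = m+2 by omega]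

lemma bc02_eq (m : ℕ) : bc 0 2 m
    = ((2*m+2).factorial : ℝ) /
      (m.factorial * m.factorial * (m+2).factorial * (m+2).factorial) := by
  rw [bc, show 0+2+2*m = 2*m+2 by omega, show 0+m = m by omega, show 2+m = m+2 by omega]

lemma bc12_eq (m : ℕ) : bc 1 2 m
    = ((2*m+3).factorial : ℝ) /
      (m.factorial * (m+1).factorial * (m+2).factorial * (m+3).factorial) := by
  rw [bc, show 1+2+2*m = 2*m+3 by omega, show 1+m = m+1 by omega, show 2+m = m+2 by omega,
    show 1+2+m = m+3 by omega]

lemma fs1 (m : ℕ) : ((m+1).factorial : ℝ) = (m+1) * m.factorial := by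
  rw [Nat.factorial_succ]; push_cast; ring

lemma fs2 (m : ℕ) : ((m+2).factorial : ℝ) = (m+2) * (m+1).factorial := by
  rw [show m+2 = (m+1)+1 by omega, Nat.factorial_succ]; push_cast; ring

lemma fs3 (m : ℕ) : ((m+3).factorial : ℝ) = (m+3) * (m+2).factorial := by
  rw [show m+3 = (m+2)+1 by omega, Nat.factorial_succ]; push_cast; ring

lemma fs4 (m : ℕ) : ((2*m+3).factorial : ℝ) = (2*m+3) * (2*m+2).factorial := by
  rw [show 2*m+3 = (2*m+2)+1 by omega, Nat.factorial_succ]; push_cast; ring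

lemma bcA (m : ℕ) : bc 0 2 m ≤ bc 1 1 m := by
  rw [bc11_eq, bc02_eq]
  have h0 := hfacpos' m; have h1 := hfacpos' (m+1); have h2 := hfacpos' (m+2)
  have hn := hfacpos' (2*m+2)
  rw [div_le_div_iff₀ (by positivity) (by positivity)]
  have e1 := fs1 m; have e2 := fs2 m
  have hm : (0:ℝ) ≤ (m:ℝ) := Nat.cast_nonneg m
  nlinarith [mul_pos (mul_pos (mul_pos hn h0) h1) (mul_pos h1 h2),
    mul_pos (mul_pos hn h0) (mul_pos (mul_pos h0 h1) h2)]

lemma bc_diff (m : ℕ) : bc 1 1 m - bc 0 2 m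
    = ((2*m+2).factorial : ℝ) /
      (m.factorial * (m+1).factorial * (m+2).factorial * (m+2).factorial) := by
  rw [bc11_eq, bc02_eq]
  have h0 := hfacpos' m; have h1 := hfacpos' (m+1); have h2 := hfacpos' (m+2)
  rw [fs2 m, fs1 m]
  field_simp
  ring

lemma bcB (m : ℕ) : bc 1 1 m - bc 0 2 m ≤ bc 1 2 m := by
  rw [bc_diff, bc12_eq]
  have h0 := hfacpos' m; have h1 := hfacpos' (m+1); have h2 := hfacpos' (m+2)
  have h3 := hfacpos' (m+3); have hn := hfacpos' (2*m+2)
  rw [div_le_div_iff₀ (by positivity) (by positivity), fs4 m, fs3 m]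
  have hm : (0:ℝ) ≤ (m:ℝ) := Nat.cast_nonneg m
  nlinarith [mul_pos (mul_pos (mul_pos hn h0) h1) (mul_pos h2 h2)]

lemma bcA0 : bc 0 2 0 < bc 1 1 0 := by
  norm_num [bc, Nat.factorial]

lemma bcB1 : bc 1 1 1 - bc 0 2 1 < bc 1 2 1 := by
  norm_num [bc, Nat.factorial]

set_option maxHeartbeats 1000000 in
/-- Theorem 4.1: for every `x > 0`, `A(x) < 0` and `B(x) < 0`; consequently for every
`μ > 0` the first-order radius correction `R¹(μ) = μ B(x)/A(x)` is strictly positive,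
and `μ ↦ R¹(μ)` is strictly increasing on `(0,∞)`. -/
theorem first_order_radius_correction (x : ℝ) (hx : 0 < x) :
    A x < 0 ∧ B x < 0 ∧ (∀ μ : ℝ, 0 < μ → 0 < μ * B x / A x) ∧
      StrictMonoOn (fun μ : ℝ => μ * B x / A x) (Set.Ioi 0) := by
  have ht : 0 < x/2 := by linarith
  have hS : ∀ a b : ℕ, Summable (fun m : ℕ => (x/2)^(a+b+2*m) * bc a b m) :=
    fun a b => summable_prod a b x
  have hAsum : Summable
      (fun m : ℕ => (x/2)^(1+1+2*m) * bc 1 1 m - (x/2)^(0+2+2*m) * bc 0 2 m) :=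
    (hS 1 1).sub (hS 0 2)
  -- positivity of the A-difference series
  have hApos : 0 < ∑' m : ℕ,
      ((x/2)^(1+1+2*m) * bc 1 1 m - (x/2)^(0+2+2*m) * bc 0 2 m) := by
    refine Summable.tsum_pos hAsum (fun m => ?_) 0 ?_
    · rw [show 0+2+2*m = 1+1+2*m by omega, ← mul_sub]
      exact mul_nonneg (le_of_lt (pow_pos ht _)) (sub_nonneg.2 (bcA m))
    · rw [show 0+2+2*0 = 1+1+2*0 by omega, ← mul_sub]
      exact mul_pos (pow_pos ht _) (sub_pos.2 bcA0)
  have m11 := besselI_mul 1 1 x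
  have m02 := besselI_mul 0 2 x
  have m12 := besselI_mul 1 2 x
  have hts := Summable.tsum_sub (hS 1 1) (hS 0 2)
  have hAeq : A x = -2 * ∑' m : ℕ,
      ((x/2)^(1+1+2*m) * bc 1 1 m - (x/2)^(0+2+2*m) * bc 0 2 m) := by
    rw [A, pow_two]
    linear_combination (-2 : ℝ) * m11 + 2 * m02 + 2 * hts
  have hA : A x < 0 := by rw [hAeq]; linarith
  -- the B-series
  have hDkey : ∀ m : ℕ,
      2*((x/2)^(1+2+2*m) * bc 1 2 m)
        - x*((x/2)^(1+1+2*m) * bc 1 1 m - (x/2)^(0+2+2*m) * bc 0 2 m)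
      = 2*(x/2)^(2+2*m)*(x/2)*(bc 1 2 m - (bc 1 1 m - bc 0 2 m)) := by
    intro m
    rw [show 1+1+2*m = 2+2*m by omega, show 0+2+2*m = 2+2*m by omega,
      show 1+2+2*m = (2+2*m)+1 by omega, pow_succ]
    ring
  have hDsum : Summable (fun m : ℕ =>
      2*((x/2)^(1+2+2*m) * bc 1 2 m)
        - x*((x/2)^(1+1+2*m) * bc 1 1 m - (x/2)^(0+2+2*m) * bc 0 2 m)) :=
    (((hS 1 2).mul_left 2)).sub (hAsum.mul_left x)
  have hDpos : 0 < ∑' m : ℕ,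
      (2*((x/2)^(1+2+2*m) * bc 1 2 m)
        - x*((x/2)^(1+1+2*m) * bc 1 1 m - (x/2)^(0+2+2*m) * bc 0 2 m)) := by
    refine Summable.tsum_pos hDsum (fun m => ?_) 1 ?_
    · rw [hDkey m]
      exact mul_nonneg (by positivity) (sub_nonneg.2 (bcB m))
    · rw [hDkey 1]
      have h5 : (0:ℝ) < 2*(x/2)^(2+2*1)*(x/2) := by positivity
      exact mul_pos h5 (sub_pos.2 (by linarith [bcB1]))
  have hDsum_eq : (∑' m : ℕ,
      (2*((x/2)^(1+2+2*m) * bc 1 2 m)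
        - x*((x/2)^(1+1+2*m) * bc 1 1 m - (x/2)^(0+2+2*m) * bc 0 2 m)))
      = 2 * (∑' m : ℕ, (x/2)^(1+2+2*m) * bc 1 2 m)
        - x * ((∑' m : ℕ, (x/2)^(1+1+2*m) * bc 1 1 m)
          - ∑' m : ℕ, (x/2)^(0+2+2*m) * bc 0 2 m) := by
    rw [Summable.tsum_sub ((hS 1 2).mul_left 2) (hAsum.mul_left x), tsum_mul_left,
      tsum_mul_left, hts]
  have hBeq : B x = -∑' m : ℕ,
      (2*((x/2)^(1+2+2*m) * bc 1 2 m)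
        - x*((x/2)^(1+1+2*m) * bc 1 1 m - (x/2)^(0+2+2*m) * bc 0 2 m)) := by
    rw [B, pow_two, hDsum_eq]
    linear_combination (-2 : ℝ) * m12 + x * m11 + (-x) * m02
  have hB : B x < 0 := by rw [hBeq]; linarith
  have hq : 0 < B x / A x := div_pos_of_neg_of_neg hB hA
  refine ⟨hA, hB, fun μ hμ => ?_, fun a ha b hb hab => ?_⟩
  · rw [mul_div_assoc]; exact mul_pos hμ hq
  · simp only [mul_div_assoc]
    exact mul_lt_mul_of_pos_right hab hq
end

section
/- (Unique determination of the leading-order stationary radius.) The function P₀(x) := I_1(x)/(x·I_0(x)) is strictly decreasing on (0,∞), satisfies 0 < P₀(x) < 1/2 for all x > 0, tends to 1/2 as x → 0⁺, and tends to 0 as x → ∞. Consequently, for every σ̃ with 0 < σ̃ < 1 there exists a unique R > 0 such that I_1(R)/(R·I_0(R)) = σ̃/2. -/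
/-- `P₀(x) = I₁(x)/(x I₀(x))`. -/
noncomputable def P₀ (x : ℝ) : ℝ := besselI 1 x / (x * besselI 0 x)

namespace BesselAux

noncomputable def Ab (k : ℕ) : ℝ := 1 / (k.factorial * (k+1).factorial)
noncomputable def Bb (k : ℕ) : ℝ := 1 / (k.factorial * k.factorial)
noncomputable def Fb (t : ℝ) : ℝ := ∑' k, Ab k * t ^ k
noncomputable def Gb (t : ℝ) : ℝ := ∑' k, Bb k * t ^ k

lemma fac_pos (k : ℕ) : (0:ℝ) < k.factorial := by exact_mod_cast k.factorial_pos

lemma one_le_fac (k : ℕ) : (1:ℝ) ≤ k.factorial := Nat.one_le_cast.mpr k.factorial_pos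

lemma Ab_pos (k : ℕ) : 0 < Ab k := by unfold Ab; positivity

lemma Bb_pos (k : ℕ) : 0 < Bb k := by unfold Bb; positivity

lemma Ab_eq (k : ℕ) : Ab k = Bb k / (k+1) := by
  unfold Ab Bb
  rw [Nat.factorial_succ]
  push_cast
  rw [div_div, one_div, one_div, mul_comm ((k:ℝ)+1) _, mul_assoc]

lemma Ab_le_Bb (k : ℕ) : Ab k ≤ Bb k := by
  rw [Ab_eq, div_le_iff₀ (by positivity)]
  nlinarith [Bb_pos k, (Nat.cast_nonneg k : (0:ℝ) ≤ k)]

lemma Ab_le (k : ℕ) : Ab k ≤ 1 / k.factorial := by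
  unfold Ab
  exact one_div_le_one_div_of_le (fac_pos k)
    (le_mul_of_one_le_right (fac_pos k).le (one_le_fac (k+1)))

lemma Bb_le (k : ℕ) : Bb k ≤ 1 / k.factorial := by
  unfold Bb
  exact one_div_le_one_div_of_le (fac_pos k)
    (le_mul_of_one_le_right (fac_pos k).le (one_le_fac k))

lemma summable_norm_aux {c : ℕ → ℝ} (hc : ∀ k, |c k| ≤ 1 / k.factorial) (t : ℝ) :
    Summable fun k => ‖c k * t ^ k‖ := by
  refine Summable.of_nonneg_of_le (fun k => norm_nonneg _) (fun k => ?_)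
    (Real.summable_pow_div_factorial |t|)
  rw [norm_mul, norm_pow, Real.norm_eq_abs, Real.norm_eq_abs]
  calc |c k| * |t| ^ k ≤ (1 / k.factorial) * |t| ^ k :=
        mul_le_mul_of_nonneg_right (hc k) (by positivity)
    _ = |t| ^ k / k.factorial := by ring

lemma abs_Ab_le (k : ℕ) : |Ab k| ≤ 1 / k.factorial := by
  rw [abs_of_pos (Ab_pos k)]; exact Ab_le k

lemma abs_Bb_le (k : ℕ) : |Bb k| ≤ 1 / k.factorial := by
  rw [abs_of_pos (Bb_pos k)]; exact Bb_le k

lemma summable_A_norm (t : ℝ) : Summable fun k => ‖Ab k * t ^ k‖ :=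
  summable_norm_aux abs_Ab_le t

lemma summable_B_norm (t : ℝ) : Summable fun k => ‖Bb k * t ^ k‖ :=
  summable_norm_aux abs_Bb_le t

lemma summable_A (t : ℝ) : Summable fun k => Ab k * t ^ k :=
  (summable_A_norm t).of_norm

lemma summable_B (t : ℝ) : Summable fun k => Bb k * t ^ k :=
  (summable_B_norm t).of_norm

lemma Fb_ge_one {t : ℝ} (ht : 0 ≤ t) : 1 ≤ Fb t := by
  have h0 : Ab 0 * t ^ 0 = 1 := by simp [Ab, Nat.factorial]
  calc (1:ℝ) = Ab 0 * t ^ 0 := h0.symm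
    _ ≤ Fb t := Summable.le_tsum (summable_A t) 0
        (fun j _ => mul_nonneg (Ab_pos j).le (pow_nonneg ht j))

lemma Gb_ge_one {t : ℝ} (ht : 0 ≤ t) : 1 ≤ Gb t := by
  have h0 : Bb 0 * t ^ 0 = 1 := by simp [Bb, Nat.factorial]
  calc (1:ℝ) = Bb 0 * t ^ 0 := h0.symm
    _ ≤ Gb t := Summable.le_tsum (summable_B t) 0
        (fun j _ => mul_nonneg (Bb_pos j).le (pow_nonneg ht j))

lemma Fb_pos {t : ℝ} (ht : 0 ≤ t) : 0 < Fb t := lt_of_lt_of_le one_pos (Fb_ge_one ht)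
lemma Gb_pos {t : ℝ} (ht : 0 ≤ t) : 0 < Gb t := lt_of_lt_of_le one_pos (Gb_ge_one ht)


lemma coeff_factor_nonneg {i j : ℕ} (hij : i ≤ j) : 0 ≤ Ab i * Bb j - Ab j * Bb i := by
  have key : ((i+1).factorial : ℝ) * j.factorial ≤ (j+1).factorial * i.factorial := by
    rw [Nat.factorial_succ, Nat.factorial_succ]
    push_cast
    have h1 : (0:ℝ) ≤ (i.factorial : ℝ) * j.factorial := by positivity
    have h2 : (i:ℝ) + 1 ≤ (j:ℝ) + 1 := by exact_mod_cast Nat.succ_le_succ hij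
    nlinarith [fac_pos i, fac_pos j]
  rw [sub_nonneg]
  unfold Ab Bb
  rw [div_mul_div_comm, div_mul_div_comm, one_mul,
    div_le_div_iff₀ (by positivity) (by positivity), one_mul, one_mul]
  have h4 := mul_le_mul_of_nonneg_left key
    (show (0:ℝ) ≤ (i.factorial : ℝ) * (j.factorial : ℝ) by positivity)
  nlinarith [h4]

lemma pow_factor_nonneg {i j : ℕ} (hij : i ≤ j) {t s : ℝ} (ht : 0 ≤ t) (hts : t ≤ s) :
    0 ≤ t ^ i * s ^ j - s ^ i * t ^ j := by
  obtain ⟨d, rfl⟩ := Nat.exists_eq_add_of_le hij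
  have hs : 0 ≤ s := ht.trans hts
  have hd : t ^ d ≤ s ^ d := pow_le_pow_left₀ ht hts d
  have h1 : 0 ≤ t ^ i * s ^ i * (s ^ d - t ^ d) :=
    mul_nonneg (mul_nonneg (pow_nonneg ht i) (pow_nonneg hs i)) (sub_nonneg.mpr hd)
  rw [pow_add, pow_add]
  nlinarith [h1]

set_option maxHeartbeats 4000000 in
lemma FG_strict {t s : ℝ} (ht : 0 ≤ t) (hts : t < s) : Fb s * Gb t < Fb t * Gb s := by
  have hs : (0:ℝ) ≤ s := ht.trans hts.le
  simp only [Fb, Gb]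
  set Φ : ℕ × ℕ → ℝ := fun p => Ab p.1 * Bb p.2 * (t ^ p.1 * s ^ p.2 - s ^ p.1 * t ^ p.2) with hΦdef
  have e1 : (∑' k, Ab k * t ^ k) * (∑' k, Bb k * s ^ k)
      = ∑' p : ℕ × ℕ, (Ab p.1 * t ^ p.1) * (Bb p.2 * s ^ p.2) :=
    tsum_mul_tsum_of_summable_norm (summable_A_norm t) (summable_B_norm s)
  have e2 : (∑' k, Ab k * s ^ k) * (∑' k, Bb k * t ^ k)
      = ∑' p : ℕ × ℕ, (Ab p.1 * s ^ p.1) * (Bb p.2 * t ^ p.2) :=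
    tsum_mul_tsum_of_summable_norm (summable_A_norm s) (summable_B_norm t)
  have S1 : Summable fun p : ℕ × ℕ => (Ab p.1 * t ^ p.1) * (Bb p.2 * s ^ p.2) :=
    summable_mul_of_summable_norm (summable_A_norm t) (summable_B_norm s)
  have S2 : Summable fun p : ℕ × ℕ => (Ab p.1 * s ^ p.1) * (Bb p.2 * t ^ p.2) :=
    summable_mul_of_summable_norm (summable_A_norm s) (summable_B_norm t)
  have hΦ : Summable Φ := by
    refine (S1.sub S2).congr fun p => ?_
    simp only [hΦdef]; ring
  have hdiff : (∑' k, Ab k * t ^ k) * (∑' k, Bb k * s ^ k)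
      - (∑' k, Ab k * s ^ k) * (∑' k, Bb k * t ^ k) = ∑' p, Φ p := by
    rw [e1, e2, ← Summable.tsum_sub S1 S2]
    exact tsum_congr fun p => by simp only [hΦdef]; ring
  have hΦswap : Summable fun p : ℕ × ℕ => Φ p.swap := hΦ.prod_symm
  have hswap : ∑' p : ℕ × ℕ, Φ p.swap = ∑' p, Φ p := (Equiv.prodComm ℕ ℕ).tsum_eq Φ
  set Γ : ℕ × ℕ → ℝ := fun p => Φ p + Φ p.swap with hΓdef
  have hΓeq : ∀ p : ℕ × ℕ,
      Γ p = (Ab p.1 * Bb p.2 - Ab p.2 * Bb p.1) * (t ^ p.1 * s ^ p.2 - s ^ p.1 * t ^ p.2) := by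
    rintro ⟨i, j⟩
    simp only [hΓdef, hΦdef, Prod.swap_prod_mk]
    ring
  have hΓnonneg : ∀ p : ℕ × ℕ, 0 ≤ Γ p := by
    rintro ⟨i, j⟩
    rw [hΓeq]
    rcases le_total i j with hij | hji
    · exact mul_nonneg (coeff_factor_nonneg hij) (pow_factor_nonneg hij ht hts.le)
    · have h1 := coeff_factor_nonneg hji
      have h2 := pow_factor_nonneg hji ht hts.le
      nlinarith [mul_nonneg h1 h2]
  have hΓ01 : 0 < Γ (0, 1) := by
    rw [hΓeq]
    have : Ab 0 * Bb 1 - Ab 1 * Bb 0 = 1/2 := by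
      norm_num [Ab, Bb, Nat.factorial]
    simp only [this]
    simp only [pow_zero, pow_one, one_mul, mul_one]
    nlinarith [hts]
  have hΓsum : Summable Γ := hΦ.add hΦswap
  have hpos : 0 < ∑' p, Γ p := Summable.tsum_pos hΓsum hΓnonneg (0, 1) hΓ01
  have h2 : ∑' p, Γ p = 2 * ∑' p, Φ p := by
    rw [hΓdef, Summable.tsum_add hΦ hΦswap, hswap]
    ring
  nlinarith [hdiff, hpos, h2]


lemma continuous_series {c : ℕ → ℝ} (hc : ∀ k, |c k| ≤ 1 / k.factorial) :
    Continuous fun t : ℝ => ∑' k, c k * t ^ k := by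
  rw [continuous_iff_continuousAt]
  intro x
  set M : ℝ := |x| + 1 with hM
  have hM0 : 0 < M := by positivity
  have hco : ContinuousOn (fun t : ℝ => ∑' k, c k * t ^ k) (Set.Icc (-M) M) := by
    refine continuousOn_tsum (fun k => (continuous_const.mul (continuous_pow k)).continuousOn)
      (Real.summable_pow_div_factorial M) (fun n y hy => ?_)
    rw [norm_mul, norm_pow, Real.norm_eq_abs, Real.norm_eq_abs]
    have hyM : |y| ≤ M := abs_le.mpr ⟨hy.1, hy.2⟩
    calc |c n| * |y| ^ n ≤ (1 / n.factorial) * M ^ n := by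
          apply mul_le_mul (hc n) (pow_le_pow_left₀ (abs_nonneg y) hyM n) (by positivity)
          positivity
      _ = M ^ n / n.factorial := by ring
  refine hco.continuousAt (Icc_mem_nhds ?_ ?_)
  · have := neg_abs_le x; linarith
  · have := le_abs_self x; linarith

lemma continuous_Fb : Continuous Fb := continuous_series abs_Ab_le
lemma continuous_Gb : Continuous Gb := continuous_series abs_Bb_le

lemma Fb_zero : Fb 0 = 1 := by
  unfold Fb
  rw [tsum_eq_single 0 (fun k hk => by simp [zero_pow hk])]
  norm_num [Ab, Nat.factorial]

lemma Gb_zero : Gb 0 = 1 := by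
  unfold Gb
  rw [tsum_eq_single 0 (fun k hk => by simp [zero_pow hk])]
  norm_num [Bb, Nat.factorial]

/-- The ratio tends to 0 at infinity. -/
lemma tendsto_ratio_atTop : Filter.Tendsto (fun t => Fb t / (2 * Gb t)) Filter.atTop (nhds 0) := by
  rw [NormedAddCommGroup.tendsto_nhds_zero]
  intro ε hε
  obtain ⟨N, hN⟩ := exists_nat_one_div_lt hε
  set δ : ℝ := ε - 1 / (N + 1) with hδ
  have hδ0 : 0 < δ := by simpa [hδ] using hN
  -- the polynomial part over B N * t ^ N tends to zero
  have hR : Filter.Tendsto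
      (fun t : ℝ => ∑ k ∈ Finset.range N, (Ab k / Bb N) * (t ^ k / t ^ N))
      Filter.atTop (nhds 0) := by
    have : Filter.Tendsto
        (fun t : ℝ => ∑ k ∈ Finset.range N, (Ab k / Bb N) * (t ^ k / t ^ N))
        Filter.atTop (nhds (∑ k ∈ Finset.range N, (Ab k / Bb N) * 0)) := by
      refine tendsto_finset_sum _ fun k hk => ?_
      exact (tendsto_pow_div_pow_atTop_zero (Finset.mem_range.mp hk)).const_mul _
    simpa using this
  have hev : ∀ᶠ t : ℝ in Filter.atTop,
      ∑ k ∈ Finset.range N, (Ab k / Bb N) * (t ^ k / t ^ N) < δ := by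
    exact hR.eventually_lt_const hδ0
  filter_upwards [hev, Filter.eventually_gt_atTop (0:ℝ)] with t hRt ht0
  have htnn : (0:ℝ) ≤ t := ht0.le
  have hG := Gb_pos htnn
  have hF := Fb_pos htnn
  -- tail bound : Fb t ≤ Pn t + Gb t / (N+1)
  have hsplitF : Fb t = ∑ k ∈ Finset.range N, Ab k * t ^ k + ∑' k, Ab (k + N) * t ^ (k + N) :=
    (Summable.sum_add_tsum_nat_add N (summable_A t)).symm
  have hsplitG : Gb t = ∑ k ∈ Finset.range N, Bb k * t ^ k + ∑' k, Bb (k + N) * t ^ (k + N) :=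
    (Summable.sum_add_tsum_nat_add N (summable_B t)).symm
  have htail : (∑' k, Ab (k + N) * t ^ (k + N)) ≤ (∑' k, Bb (k + N) * t ^ (k + N)) / (N + 1) := by
    rw [← tsum_div_const]
    refine Summable.tsum_le_tsum (fun k => ?_) ((summable_A t).comp_injective (add_left_injective N))
      (((summable_B t).comp_injective (add_left_injective N)).div_const _)
    rw [Ab_eq, div_mul_eq_mul_div, div_le_div_iff₀ (by positivity) (by positivity)]
    have h1 : ((N:ℝ) + 1) ≤ ((k + N : ℕ) : ℝ) + 1 := by push_cast; linarith [Nat.cast_nonneg (α := ℝ) k]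
    have h2 : 0 ≤ Bb (k + N) * t ^ (k + N) := mul_nonneg (Bb_pos _).le (pow_nonneg htnn _)
    nlinarith [h2]
  have htail2 : (∑' k, Bb (k + N) * t ^ (k + N)) ≤ Gb t := by
    rw [hsplitG]
    have : 0 ≤ ∑ k ∈ Finset.range N, Bb k * t ^ k :=
      Finset.sum_nonneg fun k _ => mul_nonneg (Bb_pos k).le (pow_nonneg htnn k)
    linarith
  have h4 : (∑' k, Bb (k + N) * t ^ (k + N)) / (N + 1) ≤ Gb t / (N + 1) := by
    gcongr
  have hFle : Fb t ≤ (∑ k ∈ Finset.range N, Ab k * t ^ k) + Gb t / (N + 1) := by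
    rw [hsplitF]
    linarith [htail, h4]
  -- polynomial part identity
  have hBN : (0:ℝ) < Bb N * t ^ N := mul_pos (Bb_pos N) (pow_pos ht0 N)
  have hGB : Bb N * t ^ N ≤ Gb t :=
    Summable.le_tsum (summable_B t) N (fun j _ => mul_nonneg (Bb_pos j).le (pow_nonneg htnn j))
  have hPnEq : (∑ k ∈ Finset.range N, Ab k * t ^ k)
      = (∑ k ∈ Finset.range N, (Ab k / Bb N) * (t ^ k / t ^ N)) * (Bb N * t ^ N) := by
    rw [Finset.sum_mul]
    refine Finset.sum_congr rfl fun k _ => ?_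
    field_simp [(Bb_pos N).ne']
  have hRnn : 0 ≤ ∑ k ∈ Finset.range N, (Ab k / Bb N) * (t ^ k / t ^ N) :=
    Finset.sum_nonneg fun k _ => mul_nonneg (div_nonneg (Ab_pos k).le (Bb_pos N).le)
      (div_nonneg (pow_nonneg htnn k) (pow_nonneg htnn N))
  have hPnLe : (∑ k ∈ Finset.range N, Ab k * t ^ k)
      ≤ (∑ k ∈ Finset.range N, (Ab k / Bb N) * (t ^ k / t ^ N)) * Gb t := by
    rw [hPnEq]
    exact mul_le_mul_of_nonneg_left hGB hRnn
  have hmul : (∑ k ∈ Finset.range N, (Ab k / Bb N) * (t ^ k / t ^ N)) * Gb t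
      < (ε - 1 / (N + 1)) * Gb t := by
    apply mul_lt_mul_of_pos_right _ hG
    simpa [hδ] using hRt
  have e5 : Gb t / (N + 1) = 1 / (N + 1) * Gb t := by ring
  rw [Real.norm_eq_abs, abs_of_nonneg (by positivity), div_lt_iff₀ (by positivity)]
  nlinarith [mul_pos hε hG]

lemma besselI_zero (x : ℝ) : besselI 0 x = Gb ((x / 2) ^ 2) := by
  unfold besselI Gb Bb
  rw [pow_zero, one_mul]
  exact tsum_congr fun k => by
    rw [Nat.zero_add, pow_mul]
    rw [div_eq_mul_inv, one_div, mul_comm]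

lemma besselI_one (x : ℝ) : besselI 1 x = (x / 2) * Fb ((x / 2) ^ 2) := by
  unfold besselI Fb Ab
  rw [pow_one]
  congr 1
  exact tsum_congr fun k => by
    rw [Nat.add_comm 1 k, pow_mul]
    rw [div_eq_mul_inv, one_div, mul_comm]

lemma P₀_eq {x : ℝ} (hx : 0 < x) :
    P₀ x = Fb ((x / 2) ^ 2) / (2 * Gb ((x / 2) ^ 2)) := by
  have ht : (0:ℝ) ≤ (x / 2) ^ 2 := sq_nonneg _
  have hG := Gb_pos ht
  rw [P₀, besselI_zero, besselI_one,
    div_eq_div_iff (by positivity) (by positivity)]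
  ring

lemma Fb_lt_Gb {t : ℝ} (ht : 0 < t) : Fb t < Gb t := by
  refine Summable.tsum_lt_tsum (i := 1) (fun k => ?_) ?_ (summable_A t) (summable_B t)
  · exact mul_le_mul_of_nonneg_right (Ab_le_Bb k) (pow_nonneg ht.le k)
  · have hA : Ab 1 = 1/2 := by norm_num [Ab, Nat.factorial]
    have hB : Bb 1 = 1 := by norm_num [Bb, Nat.factorial]
    rw [hA, hB, pow_one, one_mul]
    linarith

end BesselAux

open BesselAux Filter

/-- `P₀` is strictly decreasing on `(0,∞)`, satisfies `0 < P₀(x) < 1/2`, tends to `1/2`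
as `x → 0⁺` and to `0` as `x → ∞`; consequently for every `0 < σ̃ < 1` there exists a
unique `R > 0` with `I₁(R)/(R I₀(R)) = σ̃/2`. -/
theorem P₀_properties :
    StrictAntiOn P₀ (Set.Ioi 0) ∧
      (∀ x : ℝ, 0 < x → 0 < P₀ x ∧ P₀ x < 1 / 2) ∧
      Filter.Tendsto P₀ (nhdsWithin 0 (Set.Ioi 0)) (nhds (1 / 2)) ∧
      Filter.Tendsto P₀ Filter.atTop (nhds 0) ∧
      (∀ σ : ℝ, 0 < σ → σ < 1 → ∃! R : ℝ, 0 < R ∧ P₀ R = σ / 2) := by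
  have hanti : StrictAntiOn P₀ (Set.Ioi 0) := by
    intro x hx y hy hxy
    have hx0 : (0:ℝ) < x := hx
    have hy0 : (0:ℝ) < y := hy
    have htn : (0:ℝ) ≤ (x/2)^2 := sq_nonneg _
    have hsn : (0:ℝ) ≤ (y/2)^2 := sq_nonneg _
    have hts : (x/2)^2 < (y/2)^2 := by nlinarith
    have hkey := FG_strict htn hts
    rw [P₀_eq hx0, P₀_eq hy0,
      div_lt_div_iff₀ (by linarith [Gb_pos hsn]) (by linarith [Gb_pos htn])]
    nlinarith [hkey]
  have hbound : ∀ x : ℝ, 0 < x → 0 < P₀ x ∧ P₀ x < 1/2 := by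
    intro x hx
    have ht0 : (0:ℝ) < (x/2)^2 := by positivity
    rw [P₀_eq hx]
    constructor
    · exact div_pos (Fb_pos ht0.le) (by linarith [Gb_pos ht0.le])
    · rw [div_lt_iff₀ (by linarith [Gb_pos ht0.le])]
      linarith [Fb_lt_Gb ht0]
  have hcont : Continuous fun x : ℝ => Fb ((x/2)^2) / (2 * Gb ((x/2)^2)) := by
    have hq : Continuous fun x : ℝ => (x/2)^2 := (continuous_id.div_const 2).pow 2
    refine (continuous_Fb.comp hq).div
      (continuous_const.mul (continuous_Gb.comp hq)) fun x => ?_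
    have := Gb_pos (sq_nonneg (x/2))
    show 2 * Gb ((x/2)^2) ≠ 0
    linarith
  have hlim0 : Tendsto P₀ (nhdsWithin 0 (Set.Ioi 0)) (nhds (1/2)) := by
    have h1 : Tendsto (fun x : ℝ => Fb ((x/2)^2) / (2 * Gb ((x/2)^2)))
        (nhdsWithin 0 (Set.Ioi 0)) (nhds (1/2)) := by
      have h2 := hcont.continuousAt (x := 0)
      have h3 : Fb ((0/2:ℝ)^2) / (2 * Gb ((0/2:ℝ)^2)) = 1/2 := by
        norm_num [Fb_zero, Gb_zero]
      rw [ContinuousAt, h3] at h2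
      exact h2.mono_left nhdsWithin_le_nhds
    refine h1.congr' ?_
    filter_upwards [self_mem_nhdsWithin] with x hx using (P₀_eq hx).symm
  have hlimtop : Tendsto P₀ atTop (nhds 0) := by
    have hT : Tendsto (fun x : ℝ => (x/2)^2) atTop atTop :=
      (tendsto_pow_atTop two_ne_zero).comp (tendsto_id.atTop_div_const two_pos)
    have h1 := tendsto_ratio_atTop.comp hT
    refine h1.congr' ?_
    filter_upwards [eventually_gt_atTop (0:ℝ)] with x hx
    simp only [Function.comp]
    exact (P₀_eq hx).symm
  refine ⟨hanti, hbound, hlim0, hlimtop, ?_⟩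
  intro σ hσ0 hσ1
  have hpos : 0 < σ/2 := by linarith
  have hhalf : σ/2 < 1/2 := by linarith
  obtain ⟨x₁, hx₁P, hx₁0⟩ :=
    ((hlim0.eventually_const_lt hhalf).and self_mem_nhdsWithin).exists
  obtain ⟨x₂, hx₂P, hx₁₂⟩ :=
    ((hlimtop.eventually_lt_const hpos).and (eventually_gt_atTop x₁)).exists
  have hx₁0' : (0:ℝ) < x₁ := hx₁0
  have hx₂0 : (0:ℝ) < x₂ := hx₁0'.trans hx₁₂
  have hco : ContinuousOn P₀ (Set.Icc x₁ x₂) := by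
    refine (hcont.continuousOn).congr fun x hx => ?_
    exact P₀_eq (lt_of_lt_of_le hx₁0' hx.1)
  have hiv := intermediate_value_Icc' hx₁₂.le hco
  have hmem : σ/2 ∈ Set.Icc (P₀ x₂) (P₀ x₁) := ⟨hx₂P.le, hx₁P.le⟩
  obtain ⟨R, hRmem, hPR⟩ := hiv hmem
  have hR0 : 0 < R := lt_of_lt_of_le hx₁0' hRmem.1
  refine ⟨R, ⟨hR0, hPR⟩, ?_⟩
  rintro y ⟨hy0, hPy⟩
  exact hanti.injOn hy0 hR0 (by rw [hPy, hPR])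
end
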